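/- arXiv:1404.6632 — 3 statements merged into one kernel-verified Lean document; each statement's English description precedes it below -/
import Mathlib

section
/- Let M = (Q, Σ, δ, q₀, F) be a minimal DFA with |Q| = n ≥ 3 and let S ⊆ Q be such that A_S is nonempty and has state complexity Ψ(n, |S|). Then there exists a nonempty word w whose induced transformation f_w : Q → Q, q ↦ q·w, has rank exactly n − 1 (i.e., its image has cardinality n − 1). -/
/-- `Psi n s` of Brzozowski–Tamm: the tight upper bound on the state complexity
of an atom `A_S` with `|S| = s` of a language of state complexity `n`. -/
def Psi (n s : ℕ) : ℕ :=
  if s = 0 ∨ s = n then 2 ^ n - 1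
  else 1 + ∑ k ∈ Finset.Icc 1 s, ∑ l ∈ Finset.Icc 1 (n - s),
    Nat.choose n k * Nat.choose (n - k) l

/-- The Myhill–Nerode right congruence of a language `K`. -/
def rightCong {A : Type*} (K : Set (List A)) : Setoid (List A) where
  r x y := ∀ z, x ++ z ∈ K ↔ y ++ z ∈ K
  iseqv := ⟨fun _ _ => Iff.rfl, fun h z => (h z).symm, fun h1 h2 z => (h1 z).trans (h2 z)⟩

/-- The state complexity of a language: the number of classes of its
Myhill–Nerode right congruence. -/
noncomputable def stateComplexity {A : Type*} (K : Set (List A)) : ℕ :=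
  Nat.card (Quotient (rightCong K))

/-- The atom `A_S` of the language of the DFA `M`. -/
def atom {A Q : Type*} (M : DFA A Q) (S : Set Q) : Set (List A) :=
  {w | ∀ q, M.evalFrom q w ∈ M.accept ↔ q ∈ S}

/-- A DFA is minimal iff all its states are reachable and pairwise distinguishable. -/
def IsMinimal {A Q : Type*} (M : DFA A Q) : Prop :=
  (∀ q, ∃ w : List A, M.evalFrom M.start w = q) ∧
  ∀ p q : Q, p ≠ q → ∃ w : List A,
    ¬(M.evalFrom p w ∈ M.accept ↔ M.evalFrom q w ∈ M.accept)

/-!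
If `w ++ z ∈ A_S`, then `z` maps `S·w` into `F` and `Sᶜ·w` into its complement. Hence the
right-congruence class of `w` is determined by the pair `(S·w, Sᶜ·w)` when it is disjoint, and all
words with a non-disjoint pair form one dead class; counting disjoint pairs of the possible sizes
gives `Ψ(n, |S|)`. If no word has rank `n - 1`, no pair with `|S·w| + |Sᶜ·w| = n - 1` is reached:
for proper `S` and `n ≥ 3` at least one counted pair is missed, and for `S = ∅` or `S = Q` (where
the pair is just the image `Q·w`) the `n` sets of size `n - 1` are. Either way the state
complexity falls below `Ψ(n, |S|)`.
-/

open Finset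

theorem Nat.card_quotient_le_of_eq_imp_rel {α β : Type*} [Finite β] (r : Setoid α) (f : α → β)
    (hf : ∀ x y, f x = f y → r x y) : Nat.card (Quotient r) ≤ Nat.card β :=
  Nat.card_le_card_of_injective (fun c => f c.out) fun c c' h => by
    simpa using Quotient.sound (hf _ _ h)

section DisjointPairs

variable {σ : Type*} [Fintype σ] [DecidableEq σ]

theorem card_disjoint_pairs_le (k l : ℕ) :
    #{p : Finset σ × Finset σ | Disjoint p.1 p.2 ∧ #p.1 = k ∧ #p.2 = l} ≤
      (Fintype.card σ).choose k * (Fintype.card σ - k).choose l := by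
  calc #{p : Finset σ × Finset σ | Disjoint p.1 p.2 ∧ #p.1 = k ∧ #p.2 = l}
      ≤ #((powersetCard k univ).biUnion fun X => (powersetCard l Xᶜ).image (X, ·)) := by
        refine card_le_card fun p hp => ?_
        obtain ⟨hd, h1, h2⟩ := (mem_filter.1 hp).2
        refine mem_biUnion.2 ⟨p.1, mem_powersetCard.2 ⟨subset_univ _, h1⟩,
          mem_image.2 ⟨p.2, mem_powersetCard.2 ⟨fun q hq => ?_, h2⟩, rfl⟩⟩
        exact mem_compl.2 fun hq' => disjoint_left.1 hd hq' hq
    _ ≤ ∑ X ∈ powersetCard k (univ : Finset σ), #((powersetCard l Xᶜ).image (X, ·)) :=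
        card_biUnion_le
    _ ≤ ∑ _X ∈ powersetCard k (univ : Finset σ), (Fintype.card σ - k).choose l := by
        refine sum_le_sum fun X hX => card_image_le.trans_eq ?_
        rw [card_powersetCard, card_compl, (mem_powersetCard.1 hX).2]
    _ = (Fintype.card σ).choose k * (Fintype.card σ - k).choose l := by
        rw [sum_const, card_powersetCard, card_univ, smul_eq_mul]

theorem card_disjoint_pairs_Icc_le (s t : ℕ) :
    #{p : Finset σ × Finset σ | Disjoint p.1 p.2 ∧ #p.1 ∈ Icc 1 s ∧ #p.2 ∈ Icc 1 t} ≤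
      ∑ k ∈ Icc 1 s, ∑ l ∈ Icc 1 t, (Fintype.card σ).choose k * (Fintype.card σ - k).choose l := by
  rw [card_eq_sum_card_fiberwise (f := fun p => (#p.1, #p.2)) (t := Icc 1 s ×ˢ Icc 1 t)
    fun p hp => mem_product.2 (mem_filter.1 hp).2.2, sum_product]
  refine sum_le_sum fun k _ => sum_le_sum fun l _ => le_trans (card_le_card ?_)
    (card_disjoint_pairs_le k l)
  intro p hp
  simp only [mem_filter, mem_univ, true_and, Prod.mk.injEq] at hp ⊢
  exact ⟨hp.1.1, hp.2⟩

theorem exists_disjoint_pair_card_eq {k l : ℕ} (h : k + l ≤ Fintype.card σ) :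
    ∃ p : Finset σ × Finset σ, Disjoint p.1 p.2 ∧ #p.1 = k ∧ #p.2 = l := by
  obtain ⟨X, -, hX⟩ :=
    exists_subset_card_eq (s := (univ : Finset σ)) (n := k) (by rw [card_univ]; omega)
  obtain ⟨Y, hY, hYl⟩ := exists_subset_card_eq (s := Xᶜ) (n := l) (by rw [card_compl]; omega)
  exact ⟨(X, Y), disjoint_left.2 fun q hq hq' => mem_compl.1 (hY hq') hq, hX, hYl⟩

end DisjointPairs

section Atoms

open scoped Classical

variable {α σ : Type*} [Fintype σ] (M : DFA α σ) (S : Set σ)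

noncomputable def imagePair (w : List α) : Finset σ × Finset σ :=
  (S.toFinset.image (M.evalFrom · w), Sᶜ.toFinset.image (M.evalFrom · w))

noncomputable def wordRank (w : List α) : ℕ :=
  (Set.range fun q => M.evalFrom q w).ncard

theorem wordRank_eq_card_image (w : List α) :
    wordRank M w = #(univ.image (M.evalFrom · w)) := by
  rw [wordRank, ← Set.ncard_coe_finset, coe_image, coe_univ, Set.image_univ]

theorem wordRank_nil : wordRank M [] = Fintype.card σ := by
  simp [wordRank_eq_card_image, image_id']

theorem imagePair_fst_union_snd (w : List α) :
    (imagePair M S w).1 ∪ (imagePair M S w).2 = univ.image (M.evalFrom · w) := by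
  rw [imagePair, ← image_union]
  congr
  ext q
  simp only [mem_union, Set.mem_toFinset, Set.mem_compl_iff, mem_univ, em]

theorem append_mem_atom_iff (w z : List α) :
    w ++ z ∈ atom M S ↔ (∀ q ∈ (imagePair M S w).1, M.evalFrom q z ∈ M.accept) ∧
      ∀ q ∈ (imagePair M S w).2, M.evalFrom q z ∉ M.accept := by
  simp only [atom, Set.mem_ofPred_eq, DFA.evalFrom_of_append, imagePair, forall_mem_image,
    Set.mem_toFinset, Set.mem_compl_iff]
  exact ⟨fun h => ⟨fun q hq => (h q).2 hq, fun q hq hacc => hq ((h q).1 hacc)⟩,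
    fun h q => ⟨fun hacc => by_contra fun hq => h.2 hq hacc, fun hq => h.1 hq⟩⟩

theorem append_notMem_atom (w z : List α)
    (h : ¬Disjoint (imagePair M S w).1 (imagePair M S w).2) : w ++ z ∉ atom M S := fun hz => by
  obtain ⟨q, hq₁, hq₂⟩ := not_disjoint_iff.1 h
  have := (append_mem_atom_iff M S w z).1 hz
  exact this.2 q hq₂ (this.1 q hq₁)

theorem stateComplexity_atom_le (T : Finset (Finset σ × Finset σ))
    (hT : ∀ w, Disjoint (imagePair M S w).1 (imagePair M S w).2 → imagePair M S w ∈ T) :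
    stateComplexity (atom M S) ≤ #T + 1 := by
  let f : List α → Option T := fun w =>
    if h : Disjoint (imagePair M S w).1 (imagePair M S w).2 then some ⟨_, hT w h⟩ else none
  have hf : ∀ x y, f x = f y → rightCong (atom M S) x y := by
    intro x y hxy z
    by_cases hx : Disjoint (imagePair M S x).1 (imagePair M S x).2 <;>
      by_cases hy : Disjoint (imagePair M S y).1 (imagePair M S y).2 <;>
      simp only [f, hx, hy, dite_true, dite_false, reduceCtorEq, Option.some.injEq,
        Subtype.mk.injEq] at hxy
    · rw [append_mem_atom_iff, append_mem_atom_iff, hxy]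
    · exact iff_of_false (append_notMem_atom M S x z hx) (append_notMem_atom M S y z hy)
  calc stateComplexity (atom M S) ≤ Nat.card (Option T) :=
        Nat.card_quotient_le_of_eq_imp_rel _ f hf
    _ = #T + 1 := by simp

theorem stateComplexity_atom_lt_two_pow_sub_one (g : Finset σ → Finset σ × Finset σ)
    (hg : ∀ w, imagePair M S w = g ((imagePair M S w).1 ∪ (imagePair M S w).2))
    (hrank : ∀ w, wordRank M w ≠ Fintype.card σ - 1) (hσ : 2 ≤ Fintype.card σ) :
    stateComplexity (atom M S) < 2 ^ Fintype.card σ - 1 := by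
  let W : Finset (Finset σ) := {U | U.Nonempty ∧ #U ≠ Fintype.card σ - 1}
  have hWc : Fintype.card σ + 1 ≤ #Wᶜ := by
    have hsub : insert ∅ (powersetCard (Fintype.card σ - 1) univ) ⊆ Wᶜ := by
      intro U hU
      simp only [W, mem_insert, mem_powersetCard, mem_compl, mem_filter, mem_univ,
        true_and] at hU ⊢
      rcases hU with rfl | ⟨-, hU⟩
      · simp
      · exact fun h => h.2 hU
    refine le_of_eq_of_le ?_ (card_le_card hsub)
    rw [card_insert_of_notMem (by simp; omega), card_powersetCard, card_univ,
      Nat.choose_symm_of_eq_add (by omega : Fintype.card σ = Fintype.card σ - 1 + 1),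
      Nat.choose_one_right]
  have hT : ∀ w, Disjoint (imagePair M S w).1 (imagePair M S w).2 →
      imagePair M S w ∈ W.image g := by
    intro w _
    have hU := imagePair_fst_union_snd M S w
    refine mem_image.2 ⟨_, mem_filter.2 ⟨mem_univ _, ?_, ?_⟩, (hg w).symm⟩
    · rw [hU]
      exact (univ_nonempty_iff.2 (Fintype.card_pos_iff.1 (by omega))).image _
    · rw [hU, ← wordRank_eq_card_image]
      exact hrank w
  have hW : #W + #Wᶜ = 2 ^ Fintype.card σ := by
    rw [card_add_card_compl, Fintype.card_finset]
  have := stateComplexity_atom_le M S _ hT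
  have := card_image_le (s := W) (f := g)
  have : Fintype.card σ < 2 ^ Fintype.card σ := Nat.lt_two_pow_self
  omega

theorem stateComplexity_atom_lt_one_add_sum (hS : S.Nonempty) (hSc : Sᶜ.Nonempty)
    (hrank : ∀ w, wordRank M w ≠ Fintype.card σ - 1) (hσ : 3 ≤ Fintype.card σ) :
    stateComplexity (atom M S) < 1 + ∑ k ∈ Icc 1 S.ncard,
      ∑ l ∈ Icc 1 (Fintype.card σ - S.ncard),
        (Fintype.card σ).choose k * (Fintype.card σ - k).choose l := by
  have hcompl : S.ncard + Sᶜ.ncard = Fintype.card σ := by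
    rw [Set.ncard_add_ncard_compl, Nat.card_eq_fintype_card]
  have hs := hS.ncard_pos
  have hs' := hSc.ncard_pos
  let D : Finset (Finset σ × Finset σ) :=
    {p | Disjoint p.1 p.2 ∧ #p.1 ∈ Icc 1 S.ncard ∧ #p.2 ∈ Icc 1 (Fintype.card σ - S.ncard)}
  let T := D.filter fun p => #p.1 + #p.2 ≠ Fintype.card σ - 1
  have hT : ∀ w, Disjoint (imagePair M S w).1 (imagePair M S w).2 → imagePair M S w ∈ T := by
    intro w hw
    refine mem_filter.2 ⟨mem_filter.2 ⟨mem_univ _, hw, mem_Icc.2 ⟨?_, ?_⟩, mem_Icc.2 ⟨?_, ?_⟩⟩, ?_⟩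
    · exact card_pos.2 ((Set.toFinset_nonempty.2 hS).image _)
    · exact card_image_le.trans (Set.ncard_eq_toFinset_card' S).ge
    · exact card_pos.2 ((Set.toFinset_nonempty.2 hSc).image _)
    · exact card_image_le.trans ((Set.ncard_eq_toFinset_card' Sᶜ).ge.trans (by omega))
    · rw [← card_union_of_disjoint hw, imagePair_fst_union_snd, ← wordRank_eq_card_image]
      exact hrank w
  have hTD : #T < #D := by
    obtain ⟨p, hp, h1, h2⟩ := exists_disjoint_pair_card_eq (σ := σ)
      (k := min S.ncard (Fintype.card σ - 2))
      (l := Fintype.card σ - 1 - min S.ncard (Fintype.card σ - 2)) (by omega)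
    refine card_lt_card (filter_ssubset.2 ⟨p, mem_filter.2 ⟨mem_univ _, hp, ?_, ?_⟩, ?_⟩) <;>
      simp only [h1, h2, mem_Icc, ne_eq, not_not] <;> omega
  have hD : #D ≤ _ := card_disjoint_pairs_Icc_le S.ncard (Fintype.card σ - S.ncard)
  have := stateComplexity_atom_le M S T hT
  omega

end Atoms

theorem statement5_general {A Q : Type*} [Fintype Q] (M : DFA A Q)
    (n : ℕ) (hQ : Fintype.card Q = n) (hn : 3 ≤ n)
    (S : Set Q)
    (hsc : stateComplexity (atom M S) = Psi n S.ncard) :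
    ∃ w : List A, w ≠ [] ∧ (Set.range (fun q => M.evalFrom q w)).ncard = n - 1 := by
  subst hQ
  by_contra! h
  have hrank : ∀ w, wordRank M w ≠ Fintype.card Q - 1 := fun w => by
    rcases eq_or_ne w [] with rfl | hw
    · rw [wordRank_nil]
      omega
    · exact h w hw
  by_cases hS : S = ∅
  · subst hS
    have hlt := stateComplexity_atom_lt_two_pow_sub_one M ∅ (fun U => (∅, U))
      (by simp [imagePair]) hrank (by omega)
    simp only [Psi, Set.ncard_empty, true_or, ↓reduceIte] at hsc
    omega
  by_cases hSu : S = Set.univ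
  · subst hSu
    have hlt := stateComplexity_atom_lt_two_pow_sub_one M Set.univ (fun U => (U, ∅))
      (by simp [imagePair]) hrank (by omega)
    simp only [Psi, Set.ncard_univ, Nat.card_eq_fintype_card, or_true, ↓reduceIte] at hsc
    omega
  have hSne := Set.nonempty_iff_ne_empty.2 hS
  have hlt := stateComplexity_atom_lt_one_add_sum M S hSne (Set.nonempty_compl.2 hSu) hrank hn
  have hs := hSne.ncard_pos
  have hs' := Set.ncard_lt_card hSu
  rw [Nat.card_eq_fintype_card] at hs'
  rw [Psi, if_neg (by omega)] at hsc
  omega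

/-- if an atom `A_S` of a minimal DFA with `n ≥ 3` states is
nonempty of maximal state complexity `Ψ(n, |S|)`, then some nonempty word
induces a transformation of rank exactly `n - 1`. -/
theorem statement5 {A Q : Type*} [Fintype A] [Fintype Q] (M : DFA A Q)
    (n : ℕ) (hQ : Fintype.card Q = n) (hn : 3 ≤ n) (hmin : IsMinimal M)
    (S : Set Q) (hne : (atom M S).Nonempty)
    (hsc : stateComplexity (atom M S) = Psi n S.ncard) :
    ∃ w : List A, w ≠ [] ∧ (Set.range (fun q => M.evalFrom q w)).ncard = n - 1 :=
  statement5_general M n hQ hn S hsc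
end

section
/- Let M = (Q, Σ, δ, q₀, F) be a minimal DFA with |Q| = n ≥ 3 and let S ⊆ Q be such that A_S is nonempty and has state complexity Ψ(n, |S|). Then for every subset X ⊆ Q with |X| = |S|, the atom A_X is nonempty. -/
/-!
A left quotient `x⁻¹ A_S` consists of the words accepted from every state of `S·x` and rejected
from every state of `Sᶜ·x`. It is therefore either empty or the language `L(P, R)` of a pair of
disjoint nonempty sets with `|P| ≤ |S|` and `|R| ≤ n - |S|`; there are exactly `Ψ(n, |S|) - 1`
such pairs. Maximal state complexity thus forces every `L(P, R)` to be nonempty, in particular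
`A_X = L(X, Xᶜ)`. When `|S| ∈ {0, n}` the only candidate is `X = S`.
-/

open Finset

section DisjointPairs

variable {Q : Type*} [Fintype Q] [DecidableEq Q]

def boundedDisjointPairs (a b : ℕ) : Finset (Finset Q × Finset Q) :=
  {pr | Disjoint pr.1 pr.2 ∧ #pr.1 ∈ Icc 1 a ∧ #pr.2 ∈ Icc 1 b}

theorem card_filter_disjoint_of_card_eq (k l : ℕ) :
    #{pr : Finset Q × Finset Q | #pr.1 = k ∧ #pr.2 = l ∧ Disjoint pr.1 pr.2} =
      (Fintype.card Q).choose k * (Fintype.card Q - k).choose l := by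
  have hfiber : ∀ P ∈ univ.powersetCard k,
      #{pr ∈ {pr : Finset Q × Finset Q | #pr.1 = k ∧ #pr.2 = l ∧ Disjoint pr.1 pr.2} |
        pr.1 = P} = (Fintype.card Q - k).choose l := by
    intro P hP
    rw [mem_powersetCard_univ] at hP
    calc _ = #((Pᶜ.powersetCard l).map ⟨Prod.mk P, Prod.mk_right_injective P⟩) :=
          congrArg card ?_
      _ = _ := by rw [card_map, card_powersetCard, card_compl, hP]
    ext ⟨P', R⟩
    simp only [mem_filter, mem_univ, true_and, mem_map, mem_powersetCard,
      Function.Embedding.coeFn_mk, Prod.mk.injEq, subset_compl_iff_disjoint_left]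
    constructor
    · rintro ⟨⟨-, hR, hdisj⟩, rfl⟩
      exact ⟨R, ⟨hdisj, hR⟩, rfl, rfl⟩
    · rintro ⟨R, ⟨hdisj, hR⟩, rfl, rfl⟩
      exact ⟨⟨hP, hR, hdisj⟩, rfl⟩
  rw [card_eq_sum_card_fiberwise (f := Prod.fst) (t := univ.powersetCard k)
    (fun pr hpr => by simp_all), sum_congr rfl hfiber, sum_const,
    card_powersetCard, card_univ, smul_eq_mul]

theorem card_boundedDisjointPairs (a b : ℕ) :
    #(boundedDisjointPairs (Q := Q) a b) = ∑ k ∈ Icc 1 a, ∑ l ∈ Icc 1 b,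
      (Fintype.card Q).choose k * (Fintype.card Q - k).choose l := by
  rw [card_eq_sum_card_fiberwise (f := fun pr => (#pr.1, #pr.2)) (t := Icc 1 a ×ˢ Icc 1 b)
    (fun pr hpr => by simp_all [boundedDisjointPairs]), sum_product]
  refine sum_congr rfl fun k hk => sum_congr rfl fun l hl => ?_
  rw [← card_filter_disjoint_of_card_eq]
  refine congrArg card (ext fun pr => ?_)
  simp only [boundedDisjointPairs, mem_filter, mem_univ, true_and, Prod.mk.injEq]
  constructor
  · rintro ⟨⟨hdisj, -, -⟩, hk, hl⟩
    exact ⟨hk, hl, hdisj⟩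
  · rintro ⟨rfl, rfl, hdisj⟩
    exact ⟨⟨hdisj, hk, hl⟩, rfl, rfl⟩

end DisjointPairs

theorem stateComplexity_eq_ncard_range_leftQuotient {A : Type*} (K : Set (List A)) :
    stateComplexity K = (Set.range (Language.leftQuotient K)).ncard := by
  have hker : rightCong K = Setoid.ker (Language.leftQuotient K) :=
    Setoid.ext fun _ _ => Set.ext_iff.symm
  rw [stateComplexity, hker]
  exact Nat.card_congr (Setoid.quotientKerEquivRange _)

section Atoms

variable {A Q : Type*} (M : DFA A Q)

def acceptRejectLang (P R : Set Q) : Set (List A) :=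
  {z | (∀ p ∈ P, M.evalFrom p z ∈ M.accept) ∧ ∀ r ∈ R, M.evalFrom r z ∉ M.accept}

theorem atom_eq_acceptRejectLang (X : Set Q) : atom M X = acceptRejectLang M X Xᶜ := by
  ext z
  simp only [atom, acceptRejectLang, Set.mem_ofPred_eq, Set.mem_compl_iff]
  exact ⟨fun h => ⟨fun p hp => (h p).2 hp, fun r hr hacc => hr ((h r).1 hacc)⟩,
    fun h q => ⟨fun hacc => by_contra fun hq => h.2 q hq hacc, h.1 q⟩⟩

theorem leftQuotient_atom (S : Set Q) (x : List A) :
    Language.leftQuotient (atom M S) x =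
      acceptRejectLang M ((M.evalFrom · x) '' S) ((M.evalFrom · x) '' Sᶜ) := by
  ext z
  show x ++ z ∈ atom M S ↔ _
  simp only [atom_eq_acceptRejectLang, acceptRejectLang, Set.mem_ofPred_eq, Set.forall_mem_image,
    DFA.evalFrom_of_append]
  exact Iff.rfl

theorem disjoint_of_acceptRejectLang_nonempty {P R : Set Q}
    (h : (acceptRejectLang M P R).Nonempty) : Disjoint P R := by
  obtain ⟨z, hP, hR⟩ := h
  exact Set.disjoint_left.2 fun q hqP hqR => hR q hqR (hP q hqP)

variable [Fintype Q] [DecidableEq Q]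

theorem range_leftQuotient_atom_subset {T : Finset Q} (hT : T.Nonempty) (hTc : Tᶜ.Nonempty) :
    Set.range (Language.leftQuotient (atom M T)) ⊆
      insert (∅ : Set (List A))
        ((fun pr : Finset Q × Finset Q => acceptRejectLang M pr.1 pr.2) ''
          ↑(boundedDisjointPairs (Q := Q) #T (Fintype.card Q - #T))) := by
  rintro _ ⟨x, rfl⟩
  rw [leftQuotient_atom]
  rcases (acceptRejectLang M _ _).eq_empty_or_nonempty with h | h
  · exact Or.inl h
  refine Or.inr ⟨(T.image (M.evalFrom · x), Tᶜ.image (M.evalFrom · x)), ?_,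
    show acceptRejectLang M _ _ = _ by rw [coe_image, coe_image, coe_compl]⟩
  simp only [mem_coe, boundedDisjointPairs, mem_filter, mem_univ, true_and, mem_Icc]
  refine ⟨?_, ⟨(hT.image _).card_pos, card_image_le⟩, ⟨(hTc.image _).card_pos, ?_⟩⟩
  · rw [← disjoint_coe, coe_image, coe_image, coe_compl]
    exact disjoint_of_acceptRejectLang_nonempty M h
  · exact card_image_le.trans (card_compl T).le

theorem stateComplexity_atom_le_card_boundedDisjointPairs {S X : Finset Q} (hS : S.Nonempty)
    (hSc : Sᶜ.Nonempty) (hX : #X = #S) (hX_empty : atom M X = ∅) :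
    stateComplexity (atom M S) ≤ #(boundedDisjointPairs (Q := Q) #S (Fintype.card Q - #S)) := by
  set pairs := boundedDisjointPairs (Q := Q) #S (Fintype.card Q - #S)
  set lang := fun pr : Finset Q × Finset Q => acceptRejectLang M pr.1 pr.2
  have hX_mem : (X, Xᶜ) ∈ pairs := by
    have hS_pos := hS.card_pos
    have hSc_pos := hSc.card_pos
    rw [card_compl] at hSc_pos
    simp only [pairs, boundedDisjointPairs, mem_filter, mem_univ, true_and, mem_Icc, card_compl]
    exact ⟨disjoint_compl_right, by omega, by omega⟩
  have hempty_mem : (∅ : Set (List A)) ∈ lang '' pairs :=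
    ⟨(X, Xᶜ), hX_mem, show acceptRejectLang M X ↑Xᶜ = ∅ by
      rw [coe_compl, ← atom_eq_acceptRejectLang, hX_empty]⟩
  calc stateComplexity (atom M S) = (Set.range (Language.leftQuotient (atom M S))).ncard :=
        stateComplexity_eq_ncard_range_leftQuotient _
    _ ≤ (lang '' pairs).ncard :=
        Set.ncard_le_ncard (Set.insert_eq_of_mem hempty_mem ▸
          range_leftQuotient_atom_subset M hS hSc) (pairs.finite_toSet.image _)
    _ ≤ #pairs := (Set.ncard_image_le pairs.finite_toSet).trans (Set.ncard_coe_finset _).le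

end Atoms

theorem statement6_general {A Q : Type*} [Fintype Q] (M : DFA A Q)
    (n : ℕ) (hQ : Fintype.card Q = n)
    (S : Set Q) (hne : (atom M S).Nonempty)
    (hsc : stateComplexity (atom M S) = Psi n S.ncard) :
    ∀ X : Set Q, X.ncard = S.ncard → (atom M X).Nonempty := by
  classical
  intro X hX
  subst hQ
  lift S to Finset Q using S.toFinite
  lift X to Finset Q using X.toFinite
  simp only [Set.ncard_coe_finset] at hX hsc
  by_cases htriv : #S = 0 ∨ #S = Fintype.card Q
  · have hXS : X = S := by
      rcases htriv with h | h
      · rw [card_eq_zero.1 h, card_eq_zero.1 (hX.trans h)]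
      · rw [(card_eq_iff_eq_univ _).1 h, (card_eq_iff_eq_univ _).1 (hX.trans h)]
    rwa [hXS]
  obtain ⟨hS_ne_zero, hS_ne_card⟩ := not_or.1 htriv
  have hS : S.Nonempty := card_ne_zero.1 hS_ne_zero
  have hSc : Sᶜ.Nonempty := card_pos.1 (by rw [card_compl]; have := card_le_univ S; omega)
  rw [Psi, if_neg htriv, ← card_boundedDisjointPairs] at hsc
  by_contra hX_empty
  have := stateComplexity_atom_le_card_boundedDisjointPairs M hS hSc hX
    (Set.not_nonempty_iff_eq_empty.1 hX_empty)
  omega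

/-- if an atom `A_S` of a minimal DFA with `n ≥ 3` states is
nonempty of maximal state complexity `Ψ(n, |S|)`, then each `A_X` with
`|X| = |S|` is a nonempty atom as well. -/
theorem statement6 {A Q : Type*} [Fintype A] [Fintype Q] (M : DFA A Q)
    (n : ℕ) (hQ : Fintype.card Q = n) (hn : 3 ≤ n) (hmin : IsMinimal M)
    (S : Set Q) (hne : (atom M S).Nonempty)
    (hsc : stateComplexity (atom M S) = Psi n S.ncard) :
    ∀ X : Set Q, X.ncard = S.ncard → (atom M X).Nonempty :=
  statement6_general M n hQ S hne hsc
end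

section
/- Let M = (Q, Σ, δ, q₀, F) be a minimal DFA with |Q| = n ≥ 3 recognizing L. The following are equivalent: (1) L is maximally atomic (A_S is nonempty for every S ⊆ Q and each A_S has state complexity Ψ(n, |S|)); (2) every nonempty atom A_S has state complexity Ψ(n, |S|); (3) some nonempty word induces a transformation of Q of rank n − 1, and P(M) is set-transitive. -/
/-!
A word of rank `n - 1` merges one pair of states and misses one state `r`; call the common image
`c` of the merged pair its merge point. If `P(M)` is set-transitive, every ordered pair `(r, c)` of
distinct states arises this way. The realised pairs form a relation invariant under the transitive,
`2`-homogeneous group `P(M)`, and composing one such word with permutations realises at least one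
orientation of every pair. If some ordered pair were not realised, no pair could be realised in
both orientations, so the relation would be a tournament of constant out-degree `d`. But composing
the words realising `(p, ·)` and `(q, ·)` with a word that merges `p` and `q` and misses `r`, where
`(p, q)` is realised, realises at least `d + 1` pairs `(r, ·)`.

Pulling back along such words enlarges a pair of disjoint sets of states by one state at a time,
so every pair `(X, Y)` of disjoint sets with `|X| ≤ |S|`, `|Y| ≤ n - |S|` (nonempty when `S`,
resp. `Sᶜ`, is) is `(S·w, Sᶜ·w)` for some word `w`. The left quotient of `A_S` by `w` consists of
the words sending `S·w` into `F` and `Sᶜ·w` out of `F`; for disjoint pairs these languages are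
nonempty and pairwise distinct, and together with the empty quotient there are `Ψ(n, |S|)` of them.

Conversely, the same description bounds the number of quotients of `A_S` by `Ψ(n, |S|)`, with
equality only if every such pair is reached. For the nonempty atom `A_F` this yields a word of
rank `n - 1` and the `|F|`-set-transitivity of `P(M)`. Preimages under the word of rank `n - 1`
carry the nonempty atoms of one size to nonempty atoms one size up or down, so every size
`0 < k < n` carries a nonempty atom, whose maximal complexity gives `k`-set-transitivity.
-/

open Function Set

section

variable {Q : Type*} {f g : Q → Q} {p q r q' r' : Q}

structure IsMerge (f : Q → Q) (p q r : Q) : Prop where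
  ne : p ≠ q
  apply_eq : f p = f q
  range_eq : range f = {r}ᶜ

namespace IsMerge

theorem symm (h : IsMerge f p q r) : IsMerge f q p r :=
  ⟨h.ne.symm, h.apply_eq.symm, h.range_eq⟩

theorem apply_ne (h : IsMerge f p q r) (x : Q) : f x ≠ r := by
  have : f x ∈ range f := mem_range_self x
  rwa [h.range_eq] at this

theorem subset_range_iff (h : IsMerge f p q r) {Z : Set Q} : Z ⊆ range f ↔ r ∉ Z := by
  rw [h.range_eq, subset_compl_singleton_iff]

theorem image_compl_singleton (h : IsMerge f p q r) : f '' {p}ᶜ = range f := by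
  refine (image_subset_range _ _).antisymm ?_
  rintro _ ⟨x, rfl⟩
  by_cases hx : x = p
  · exact ⟨q, h.ne.symm, by rw [hx, h.apply_eq]⟩
  · exact ⟨x, hx, rfl⟩

theorem comp (h₁ : IsMerge f p q r) (h₂ : IsMerge g r q' r') : IsMerge (g ∘ f) p q r' :=
  ⟨h₁.ne, by simp only [comp_apply, h₁.apply_eq], by
    rw [range_comp, h₁.range_eq, h₂.image_compl_singleton, h₂.range_eq]⟩

theorem comp_bijective (h : IsMerge f p q r) (hg : Bijective g) : IsMerge (g ∘ f) p q (g r) :=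
  ⟨h.ne, by simp only [comp_apply, h.apply_eq], by
    rw [range_comp, h.range_eq, image_compl_eq hg, image_singleton]⟩

variable [Finite Q]

theorem injOn (h : IsMerge f p q r) : InjOn f {p}ᶜ := by
  refine injOn_of_ncard_image_eq ?_
  rw [h.image_compl_singleton, h.range_eq, ncard_compl, ncard_compl, ncard_singleton,
    ncard_singleton]

theorem ncard_preimage_of_apply_notMem (h : IsMerge f p q r) {Z : Set Q} (hZ : f p ∉ Z) :
    (f ⁻¹' Z).ncard = (Z \ {r}).ncard := by
  have hinj : InjOn f (f ⁻¹' Z) :=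
    h.injOn.mono fun x (hx : f x ∈ Z) (hxp : x = p) => hZ (hxp ▸ hx)
  rw [← hinj.ncard_image, image_preimage_eq_inter_range, h.range_eq, sdiff_eq]

theorem ncard_preimage_of_apply_mem (h : IsMerge f p q r) {Z : Set Q} (hZ : f p ∈ Z)
    (hr : r ∉ Z) : (f ⁻¹' Z).ncard = Z.ncard + 1 := by
  have hinj : InjOn f (f ⁻¹' Z \ {p}) := h.injOn.mono fun _ hx => hx.2
  have himage : f '' (f ⁻¹' Z \ {p}) = Z := by
    rw [sdiff_eq, inter_comm, image_inter_preimage, h.image_compl_singleton,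
      inter_eq_right.mpr (h.subset_range_iff.mpr hr)]
  rw [← ncard_sdiff_singleton_add_one (show p ∈ f ⁻¹' Z from hZ), ← hinj.ncard_image, himage]

theorem exists_of_ncard_range [Nonempty Q] (hf : (range f).ncard = Nat.card Q - 1) :
    ∃ p q r, IsMerge f p q r := by
  have hpos : 0 < Nat.card Q := Nat.card_pos
  obtain ⟨r, hr⟩ : ∃ r, (range f)ᶜ = {r} := by
    rw [← ncard_eq_one, ncard_compl, hf]
    omega
  have hninj : ¬Injective f := fun hinj => by
    rw [(Finite.injective_iff_surjective.mp hinj).range_eq, ncard_univ] at hf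
    omega
  simp only [Injective, not_forall] at hninj
  obtain ⟨p, q, hpq, hne⟩ := hninj
  exact ⟨p, q, r, hne, hpq, by rw [← compl_compl (range f), hr]⟩

end IsMerge

end

section TransformationMonoid

variable {Q : Type*} (T : Submonoid (Function.End Q))

theorem Submonoid.comp_mem {f g : Q → Q} (hf : f ∈ T) (hg : g ∈ T) : g ∘ f ∈ T :=
  T.mul_mem hg hf

def HasMerge (r c : Q) : Prop := ∃ f : Q → Q, f ∈ T ∧ ∃ p q, IsMerge f p q r ∧ f p = c

variable {T}

theorem HasMerge.ne {r c : Q} (h : HasMerge T r c) : r ≠ c := by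
  obtain ⟨f, -, p, q, hm, rfl⟩ := h
  exact (hm.apply_ne p).symm

theorem HasMerge.comp {p c q r : Q} {e : Q → Q} (h : HasMerge T p c) (he : e ∈ T)
    (hm : IsMerge e p q r) : HasMerge T r (e c) := by
  obtain ⟨f, hf, p', q', hm', rfl⟩ := h
  exact ⟨e ∘ f, T.comp_mem hf he, p', q', hm'.comp hm, rfl⟩

variable [Finite Q]

variable (T) in
def permGroup : Subgroup (Equiv.Perm Q) where
  carrier := {σ | ⇑σ ∈ T}
  one_mem' := T.one_mem
  mul_mem' {σ τ} hσ hτ := T.comp_mem (f := τ) (g := σ) hτ hσ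
  inv_mem' {σ} hσ := by
    have h : σ⁻¹ = σ ^ (orderOf σ - 1) := by
      rw [pow_sub σ (orderOf_pos σ), pow_orderOf_eq_one, pow_one, one_mul]
    rw [mem_ofPred_eq, h, Equiv.Perm.coe_pow]
    exact T.pow_mem hσ _

variable (T) in
def IsSetTransitive : Prop :=
  ∀ X Y : Set Q, X.ncard = Y.ncard → ∃ σ ∈ permGroup T, ⇑σ '' X = Y

namespace IsSetTransitive

theorem of_ncard_pos_lt (h : ∀ X Y : Set Q, X.ncard = Y.ncard → 0 < X.ncard →
    X.ncard < Nat.card Q → ∃ σ ∈ permGroup T, ⇑σ '' X = Y) : IsSetTransitive T := by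
  intro X Y hXY
  by_cases hX : 0 < X.ncard ∧ X.ncard < Nat.card Q
  · exact h X Y hXY hX.1 hX.2
  suffices X = Y from ⟨1, one_mem _, by rw [Equiv.Perm.coe_one, image_id, this]⟩
  rcases Nat.eq_zero_or_pos X.ncard with h0 | h0
  · rw [(ncard_eq_zero (s := X)).mp h0, (ncard_eq_zero (s := Y)).mp (hXY ▸ h0)]
  · have hXn : X.ncard = Nat.card Q := by have := ncard_le_card X; omega
    have huniv (Z : Set Q) (hZ : Z.ncard = Nat.card Q) : Z = univ :=
      not_not.mp fun hZu => (ncard_lt_card hZu).ne hZ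
    rw [huniv X hXn, huniv Y (hXY ▸ hXn)]

variable (hT : IsSetTransitive T)
include hT

theorem exists_apply_eq (a b : Q) : ∃ σ ∈ permGroup T, σ a = b := by
  obtain ⟨σ, hσ, h⟩ := hT {a} {b} (by rw [ncard_singleton, ncard_singleton])
  rw [image_singleton, singleton_eq_singleton_iff] at h
  exact ⟨σ, hσ, h⟩

theorem exists_apply_eq_pair {a b c d : Q} (hab : a ≠ b) (hcd : c ≠ d) :
    ∃ σ ∈ permGroup T, σ a = c ∧ σ b = d ∨ σ a = d ∧ σ b = c := by
  obtain ⟨σ, hσ, h⟩ := hT {a, b} {c, d} (by rw [ncard_pair hab, ncard_pair hcd])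
  rw [image_pair, pair_eq_pair_iff] at h
  exact ⟨σ, hσ, h⟩

end IsSetTransitive

theorem HasMerge.perm {r c : Q} (h : HasMerge T r c) {σ : Equiv.Perm Q}
    (hσ : σ ∈ permGroup T) : HasMerge T (σ r) (σ c) := by
  obtain ⟨f, hf, p, q, hm, rfl⟩ := h
  exact ⟨σ ∘ f, T.comp_mem hf hσ, p, q, hm.comp_bijective σ.bijective, rfl⟩

variable {e : Q → Q} {p q r : Q}

theorem ncard_setOf_hasMerge_eq (hT : IsSetTransitive T) (a b : Q) :
    {z | HasMerge T a z}.ncard = {z | HasMerge T b z}.ncard := by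
  have key (a b : Q) : {z | HasMerge T a z}.ncard ≤ {z | HasMerge T b z}.ncard := by
    obtain ⟨σ, hσ, rfl⟩ := hT.exists_apply_eq a b
    rw [← σ.injective.injOn.ncard_image]
    exact ncard_le_ncard (image_subset_iff.mpr fun z hz => hz.perm hσ)
  exact (key a b).antisymm (key b a)

theorem exists_hasMerge_and_hasMerge (hT : IsSetTransitive T) (he : e ∈ T)
    (hm : IsMerge e p q r) : ∃ a b, HasMerge T a b ∧ HasMerge T b a := by
  by_contra! hasym
  wlog hpq : HasMerge T p q generalizing p q
  · obtain ⟨σ, hσ, hσrc⟩ := hT.exists_apply_eq_pair (hm.apply_ne p).symm hm.ne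
    have hbase : HasMerge T r (e p) := ⟨e, he, p, q, hm, rfl⟩
    rcases hσrc with ⟨h₁, h₂⟩ | ⟨h₁, h₂⟩
    · exact (hpq (h₁ ▸ h₂ ▸ hbase.perm hσ)).elim
    · exact this hm.symm (h₁ ▸ h₂ ▸ hbase.perm hσ)
  set N : Q → Set Q := fun a => {z | HasMerge T a z}
  have hmaps : MapsTo e (N p ∪ N q) (N r) := by
    rintro z (hz | hz)
    · exact hz.comp he hm
    · exact hz.comp he hm.symm
  have hpN : p ∉ N p ∪ N q := by
    rintro (hp | hp)
    · exact hp.ne rfl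
    · exact hasym q p hp hpq
  have hqN : q ∉ N q := fun hq => hq.ne rfl
  have hinj : InjOn e (N p ∪ N q) := hm.injOn.mono fun x hx (hxp : x = p) => hpN (hxp ▸ hx)
  have hle : (N q).ncard + 1 ≤ (N r).ncard :=
    calc (N q).ncard + 1 = (insert q (N q)).ncard := (ncard_insert_of_notMem hqN).symm
      _ ≤ (N p ∪ N q).ncard := ncard_le_ncard (insert_subset (Or.inl hpq) subset_union_right)
      _ = (e '' (N p ∪ N q)).ncard := hinj.ncard_image.symm
      _ ≤ (N r).ncard := ncard_le_ncard hmaps.image_subset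
  have : (N q).ncard = (N r).ncard := ncard_setOf_hasMerge_eq hT q r
  omega

theorem hasMerge_of_ne (hT : IsSetTransitive T) (he : e ∈ T) (hm : IsMerge e p q r)
    {a b : Q} (hab : a ≠ b) : HasMerge T a b := by
  obtain ⟨c, d, hcd, hdc⟩ := exists_hasMerge_and_hasMerge hT he hm
  obtain ⟨σ, hσ, h⟩ := hT.exists_apply_eq_pair hcd.ne hab
  rcases h with ⟨h₁, h₂⟩ | ⟨h₁, h₂⟩
  · exact h₁ ▸ h₂ ▸ hcd.perm hσ
  · exact h₁ ▸ h₂ ▸ hdc.perm hσ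

theorem exists_mem_apply_eq_apply (hT : IsSetTransitive T) (he : e ∈ T) (hm : IsMerge e p q r)
    {a b : Q} (hab : a ≠ b) : ∃ f : Q → Q, f ∈ T ∧ f a = f b := by
  obtain ⟨σ, hσ, h⟩ := hT.exists_apply_eq_pair hab hm.ne
  refine ⟨e ∘ σ, T.comp_mem hσ he, ?_⟩
  rcases h with ⟨h₁, h₂⟩ | ⟨h₁, h₂⟩ <;> simp only [comp_apply, h₁, h₂, hm.apply_eq]

end TransformationMonoid

section ImagePairs

variable {Q : Type*} (T : Submonoid (Function.End Q))

def imagePairs (S : Set Q) : Set (Set Q × Set Q) :=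
  {P | ∃ f : Q → Q, f ∈ T ∧ (f '' S, f '' Sᶜ) = P}

/-- The pairs counted by `Psi`: the candidates for `(f '' S, f '' Sᶜ)` with disjoint entries. -/
def admissiblePairs (S : Set Q) : Set (Set Q × Set Q) :=
  {P | Disjoint P.1 P.2 ∧ P.1.ncard ≤ S.ncard ∧ P.2.ncard ≤ Sᶜ.ncard ∧
    (S.Nonempty → P.1.Nonempty) ∧ (Sᶜ.Nonempty → P.2.Nonempty)}

variable {T} {S X Y : Set Q}

theorem mem_admissiblePairs :
    (X, Y) ∈ admissiblePairs S ↔ Disjoint X Y ∧ X.ncard ≤ S.ncard ∧ Y.ncard ≤ Sᶜ.ncard ∧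
      (S.Nonempty → X.Nonempty) ∧ (Sᶜ.Nonempty → Y.Nonempty) :=
  Iff.rfl

theorem swap_mem_admissiblePairs_compl {P : Set Q × Set Q} :
    P.swap ∈ admissiblePairs Sᶜ ↔ P ∈ admissiblePairs S := by
  simp only [admissiblePairs, mem_ofPred_eq, Prod.fst_swap, Prod.snd_swap, compl_compl,
    disjoint_comm (a := P.2)]
  tauto

theorem swap_mem_imagePairs_compl {P : Set Q × Set Q} :
    P.swap ∈ imagePairs T Sᶜ ↔ P ∈ imagePairs T S := by
  simp only [imagePairs, mem_ofPred_eq, compl_compl]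
  exact exists_congr fun f => and_congr_right fun _ => Prod.swap_inj (p := (f '' S, f '' Sᶜ))

variable [Finite Q]

theorem image_mem_admissiblePairs_iff (f : Q → Q) :
    (f '' S, f '' Sᶜ) ∈ admissiblePairs S ↔ Disjoint (f '' S) (f '' Sᶜ) :=
  ⟨fun h => h.1, fun h => ⟨h, ncard_image_le, ncard_image_le, .image f, .image f⟩⟩

theorem eq_compl_of_ncard_add_eq (h : Disjoint X Y) (hXY : X.ncard + Y.ncard = Nat.card Q) :
    Y = Xᶜ :=
  eq_of_subset_of_ncard_le h.subset_compl_left (by rw [ncard_compl]; omega)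

theorem IsSetTransitive.mk_compl_mem_imagePairs (hT : IsSetTransitive T) (h : S.ncard = X.ncard) :
    (X, Xᶜ) ∈ imagePairs T S := by
  obtain ⟨σ, hσ, hσS⟩ := hT S X h
  exact ⟨σ, hσ, by rw [image_compl_eq σ.bijective, hσS]⟩

theorem admissiblePairs_subset_imagePairs (hT : IsSetTransitive T) {e : Q → Q} {p q r : Q}
    (he : e ∈ T) (hm : IsMerge e p q r) (S : Set Q) : admissiblePairs S ⊆ imagePairs T S := by
  rintro ⟨X, Y⟩ hP
  obtain ⟨m, hcard⟩ : ∃ m, X.ncard + Y.ncard + m = Nat.card Q := by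
    refine ⟨_, Nat.add_sub_of_le ?_⟩
    rw [← ncard_union_eq hP.1]
    exact ncard_le_card _
  induction m generalizing S X Y with
  | zero =>
    obtain ⟨hXY, hX, hY, -, -⟩ := mem_admissiblePairs.mp hP
    have hS := ncard_add_ncard_compl S
    rw [eq_compl_of_ncard_add_eq hXY (by omega)] at hY ⊢
    rw [ncard_compl] at hY
    exact hT.mk_compl_mem_imagePairs (by omega)
  | succ m ih =>
    wlog hX : X.ncard < S.ncard generalizing S X Y
    · have hS := ncard_add_ncard_compl S
      have hY : Y.ncard < Sᶜ.ncard := by omega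
      exact swap_mem_imagePairs_compl.mp
        (this Sᶜ Y X (swap_mem_admissiblePairs_compl.mpr hP) (by omega) hY)
    obtain ⟨hXY, -, hYS, hSX, hSY⟩ := mem_admissiblePairs.mp hP
    obtain ⟨z, hz⟩ : ∃ z, z ∉ X ∪ Y := by
      by_contra! h
      rw [← ncard_union_eq hXY, eq_univ_of_forall h, ncard_univ] at hcard
      omega
    have hzX : z ∉ X := fun h => hz (Or.inl h)
    have hzY : z ∉ Y := fun h => hz (Or.inr h)
    obtain ⟨x, hx⟩ := hSX (nonempty_of_ncard_ne_zero (by omega))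
    -- pull `(X, Y)` back along a word missing `z` and merging onto `x`
    obtain ⟨f, hf, p', q', hm', rfl⟩ := hasMerge_of_ne hT he hm (a := z) (b := x)
      fun h => hzX (h ▸ hx)
    have hfX := hm'.ncard_preimage_of_apply_mem hx hzX
    have hfY := hm'.ncard_preimage_of_apply_notMem (Z := Y) (hXY.notMem_of_mem_left hx)
    rw [sdiff_singleton_eq_self hzY] at hfY
    have hSY' (hSc : Sᶜ.Nonempty) : (f ⁻¹' Y).Nonempty := by
      obtain ⟨y, hy⟩ := hSY hSc
      obtain ⟨y', rfl⟩ := hm'.subset_range_iff.mpr hzY hy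
      exact ⟨y', hy⟩
    obtain ⟨g, hg, hgS⟩ := ih S (f ⁻¹' X) (f ⁻¹' Y)
      (mem_admissiblePairs.mpr ⟨hXY.preimage f, by omega, by omega, fun _ => ⟨p', hx⟩, hSY'⟩)
      (by omega)
    obtain ⟨hgX, hgY⟩ := Prod.mk.inj hgS
    refine ⟨f ∘ g, T.comp_mem hg hf, ?_⟩
    rw [image_comp, image_comp, hgX, hgY,
      image_preimage_eq_of_subset (hm'.subset_range_iff.mpr hzX),
      image_preimage_eq_of_subset (hm'.subset_range_iff.mpr hzY)]

theorem exists_perm_image_eq_of_admissiblePairs_subset (hsub : admissiblePairs S ⊆ imagePairs T S)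
    (hX : X.ncard = S.ncard) (hY : Y.ncard = S.ncard) : ∃ σ ∈ permGroup T, ⇑σ '' X = Y := by
  have hto (X : Set Q) (hX : X.ncard = S.ncard) : ∃ σ ∈ permGroup T, ⇑σ '' S = X := by
    have hXc : Xᶜ.ncard = Sᶜ.ncard := by rw [ncard_compl, ncard_compl, hX]
    obtain ⟨f, hf, hfS⟩ := hsub (mem_admissiblePairs.mpr ⟨disjoint_compl_right, hX.le, hXc.le,
      fun hS => (ncard_pos).mp (hX ▸ (ncard_pos).mpr hS),
      fun hSc => (ncard_pos).mp (hXc ▸ (ncard_pos).mpr hSc)⟩)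
    obtain ⟨h₁, h₂⟩ := Prod.mk.inj hfS
    have hsurj : Surjective f := by
      rw [← range_eq_univ, ← image_univ, ← union_compl_self S, image_union, h₁, h₂,
        union_compl_self, union_compl_self]
    exact ⟨Equiv.ofBijective f ⟨Finite.injective_iff_surjective.mpr hsurj, hsurj⟩, hf, h₁⟩
  obtain ⟨σ, hσ, rfl⟩ := hto X hX
  obtain ⟨τ, hτ, rfl⟩ := hto Y hY
  refine ⟨τ * σ⁻¹, mul_mem hτ (inv_mem hσ), ?_⟩
  rw [Equiv.Perm.coe_mul, image_comp, Equiv.Perm.inv_def, Equiv.symm_image_image]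

theorem exists_ncard_range_eq_of_admissiblePairs_subset
    (hsub : admissiblePairs S ⊆ imagePairs T S) (hS : S.Nonempty) (hSc : Sᶜ.Nonempty)
    (hn : 3 ≤ Nat.card Q) : ∃ f : Q → Q, f ∈ T ∧ (range f).ncard = Nat.card Q - 1 := by
  obtain ⟨z, hz, hzc⟩ : ∃ z, (S \ {z}).Nonempty ∧ (Sᶜ \ {z}).Nonempty := by
    have := ncard_add_ncard_compl S
    rcases le_or_gt 2 S.ncard with h | h
    · obtain ⟨z, hz⟩ := hS
      refine ⟨z, ?_, by rwa [sdiff_singleton_eq_self (not_not.mpr hz)]⟩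
      rw [← ncard_pos, ncard_sdiff_singleton_of_mem hz]
      omega
    · obtain ⟨z, hz⟩ := hSc
      refine ⟨z, by rwa [sdiff_singleton_eq_self hz], ?_⟩
      rw [← ncard_pos, ncard_sdiff_singleton_of_mem hz]
      omega
  obtain ⟨f, hf, hfS⟩ := hsub (mem_admissiblePairs.mpr
    ⟨disjoint_compl_right.mono sdiff_subset sdiff_subset, ncard_le_ncard sdiff_subset,
      ncard_le_ncard sdiff_subset, fun _ => hz, fun _ => hzc⟩)
  obtain ⟨h₁, h₂⟩ := Prod.mk.inj hfS
  refine ⟨f, hf, ?_⟩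
  rw [← image_univ, ← union_compl_self S, image_union, h₁, h₂, ← union_sdiff_distrib,
    union_compl_self, ← compl_eq_univ_sdiff, ncard_compl, ncard_singleton]

end ImagePairs

section Counting

open Finset

variable {α : Type*} [Fintype α] [DecidableEq α]

theorem Finset.card_disjoint_pairs (k l : ℕ) :
    #{P : Finset α × Finset α | Disjoint P.1 P.2 ∧ #P.1 = k ∧ #P.2 = l} =
      (Fintype.card α).choose k * (Fintype.card α - k).choose l := by
  set D : Finset (Finset α × Finset α) := {P | Disjoint P.1 P.2 ∧ #P.1 = k ∧ #P.2 = l}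
  rw [card_eq_sum_card_fiberwise (f := Prod.fst) (t := powersetCard k univ)
    (fun P hP => mem_powersetCard.mpr ⟨subset_univ _, (mem_filter.mp hP).2.2.1⟩)]
  have hfiber (X : Finset α) (hX : X ∈ powersetCard k univ) :
      #{P ∈ D | P.1 = X} = (Fintype.card α - k).choose l := by
    have : ({P ∈ D | P.1 = X} : Finset _) =
        (powersetCard l Xᶜ).map ⟨(X, ·), Prod.mk_right_injective X⟩ := by
      ext ⟨X', Y⟩
      simp only [D, mem_filter, mem_univ, true_and, mem_map, mem_powersetCard,
        subset_compl_iff_disjoint_left, Function.Embedding.coeFn_mk, Prod.mk.injEq]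
      constructor
      · rintro ⟨⟨hd, -, hY⟩, rfl⟩
        exact ⟨Y, ⟨hd, hY⟩, rfl, rfl⟩
      · rintro ⟨Y, ⟨hd, hY⟩, rfl, rfl⟩
        exact ⟨⟨hd, (mem_powersetCard.mp hX).2, hY⟩, rfl⟩
    rw [this, card_map, card_powersetCard, card_compl, (mem_powersetCard.mp hX).2]
  rw [sum_congr rfl hfiber, sum_const, card_powersetCard, card_univ, smul_eq_mul]

theorem Finset.card_disjoint_pairs_mem (K L : Finset ℕ) :
    #{P : Finset α × Finset α | Disjoint P.1 P.2 ∧ #P.1 ∈ K ∧ #P.2 ∈ L} =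
      ∑ k ∈ K, ∑ l ∈ L, (Fintype.card α).choose k * (Fintype.card α - k).choose l := by
  rw [card_eq_sum_card_fiberwise (f := fun P => (#P.1, #P.2)) (t := K ×ˢ L)
    (fun P hP => mem_product.mpr (mem_filter.mp hP).2.2), sum_product]
  refine sum_congr rfl fun k hk => sum_congr rfl fun l hl => ?_
  rw [← card_disjoint_pairs, filter_filter]
  congr 1
  ext P
  simp only [mem_filter, mem_univ, true_and, Prod.mk.injEq]
  constructor
  · rintro ⟨⟨hd, -, -⟩, h₁, h₂⟩
    exact ⟨hd, h₁, h₂⟩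
  · rintro ⟨hd, h₁, h₂⟩
    exact ⟨⟨hd, h₁ ▸ hk, h₂ ▸ hl⟩, h₁, h₂⟩

theorem Nat.sum_Icc_one_choose (n : ℕ) : ∑ k ∈ Icc 1 n, n.choose k = 2 ^ n - 1 := by
  have := Nat.sum_range_choose n
  rw [Nat.range_succ_eq_Icc_zero, ← Finset.insert_Icc_add_one_left_eq_Icc (Nat.zero_le n), zero_add,
    Finset.sum_insert (by simp), Nat.choose_zero_right] at this
  omega

end Counting

open Finset in
theorem Set.ncard_disjoint_pairs_mem {α : Type*} [Finite α] (K L : Finset ℕ) :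
    {P : Set α × Set α | Disjoint P.1 P.2 ∧ P.1.ncard ∈ K ∧ P.2.ncard ∈ L}.ncard =
      ∑ k ∈ K, ∑ l ∈ L, (Nat.card α).choose k * (Nat.card α - k).choose l := by
  classical
  have := Fintype.ofFinite α
  set coe₂ : Finset α × Finset α → Set α × Set α := fun P => (P.1, P.2)
  have hinj : Injective coe₂ := Finset.coe_injective.prodMap Finset.coe_injective
  have : {P : Set α × Set α | Disjoint P.1 P.2 ∧ P.1.ncard ∈ K ∧ P.2.ncard ∈ L} =
      coe₂ '' ↑({P : Finset α × Finset α | Disjoint P.1 P.2 ∧ #P.1 ∈ K ∧ #P.2 ∈ L} :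
        Finset _) := by
    ext ⟨X, Y⟩
    constructor
    · intro h
      refine ⟨(X.toFinset, Y.toFinset), ?_, by simp [coe₂]⟩
      simpa only [coe_filter, Finset.mem_univ, true_and, Set.mem_ofPred_eq, Set.disjoint_toFinset,
        ← Set.ncard_eq_toFinset_card'] using h
    · rintro ⟨⟨X', Y'⟩, h, he⟩
      simp only [coe₂, Prod.mk.injEq] at he
      obtain ⟨rfl, rfl⟩ := he
      simpa using h
  rw [this, Set.ncard_image_of_injective _ hinj, Set.ncard_coe_finset,
    Finset.card_disjoint_pairs_mem, Nat.card_eq_fintype_card]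

section Psi

variable {Q : Type*} [Finite Q]

theorem ncard_admissiblePairs_add_one {S : Set Q} (hS : S.Nonempty) (hSc : Sᶜ.Nonempty) :
    (admissiblePairs S).ncard + 1 = Psi (Nat.card Q) S.ncard := by
  have hs := (ncard_pos).mpr hS
  have hsc := (ncard_pos).mpr hSc
  have hn := ncard_add_ncard_compl S
  have : admissiblePairs S = {P : Set Q × Set Q | Disjoint P.1 P.2 ∧
      P.1.ncard ∈ Finset.Icc 1 S.ncard ∧ P.2.ncard ∈ Finset.Icc 1 (Nat.card Q - S.ncard)} := by
    ext ⟨X, Y⟩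
    simp only [mem_admissiblePairs, mem_ofPred_eq, Finset.mem_Icc, hS, hSc, forall_const]
    rw [← ncard_pos (s := X), ← ncard_pos (s := Y)]
    exact and_congr_right fun _ => by omega
  rw [this, ncard_disjoint_pairs_mem, Psi, if_neg (by omega), add_comm]

theorem ncard_admissiblePairs_empty [Nonempty Q] :
    (admissiblePairs (∅ : Set Q)).ncard = Psi (Nat.card Q) (∅ : Set Q).ncard := by
  have : admissiblePairs (∅ : Set Q) = {P : Set Q × Set Q | Disjoint P.1 P.2 ∧
      P.1.ncard ∈ ({0} : Finset ℕ) ∧ P.2.ncard ∈ Finset.Icc 1 (Nat.card Q)} := by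
    ext ⟨X, Y⟩
    simp only [mem_admissiblePairs, mem_ofPred_eq, Finset.mem_singleton, Finset.mem_Icc,
      compl_empty, ncard_univ, ncard_empty, univ_nonempty, forall_const, Set.not_nonempty_empty,
      false_implies, true_and]
    rw [← ncard_pos (s := Y)]
    exact and_congr_right fun _ => by
      have := ncard_le_card Y
      omega
  rw [this, ncard_disjoint_pairs_mem, Finset.sum_singleton, ncard_empty, Psi, if_pos (Or.inl rfl)]
  simp only [Nat.choose_zero_right, one_mul, Nat.sub_zero, Nat.sum_Icc_one_choose]

theorem ncard_admissiblePairs_univ [Nonempty Q] :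
    (admissiblePairs (univ : Set Q)).ncard = Psi (Nat.card Q) (univ : Set Q).ncard := by
  have : admissiblePairs (univ : Set Q) = Prod.swap '' admissiblePairs ∅ := by
    ext P
    rw [image_swap_eq_preimage_swap, mem_preimage, ← compl_univ,
      swap_mem_admissiblePairs_compl]
  rw [this, ncard_image_of_injective _ Prod.swap_injective, ncard_admissiblePairs_empty,
    ncard_empty, ncard_univ, Psi, Psi, if_pos (Or.inl rfl), if_pos (Or.inr rfl)]

end Psi

theorem Nat.iff_of_iff_succ {P : ℕ → Prop} {a b : ℕ}
    (h : ∀ k, a ≤ k → k < b → (P k ↔ P (k + 1))) {k : ℕ} (hak : a ≤ k) (hkb : k ≤ b) :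
    P a ↔ P k := by
  induction k, hak using Nat.le_induction with
  | base => rfl
  | succ k hak ih => exact (ih (by omega)).trans (h k hak (by omega))

section Automaton

variable {A Q : Type*} (M : DFA A Q)

def transitionMonoid : Submonoid (Function.End Q) where
  carrier := range fun w q => M.evalFrom q w
  mul_mem' := by
    rintro _ _ ⟨u, rfl⟩ ⟨v, rfl⟩
    exact ⟨v ++ u, funext fun q => M.evalFrom_of_append q v u⟩
  one_mem' := ⟨[], funext M.evalFrom_nil⟩

def pairLang (X Y : Set Q) : Set (List A) :=
  {z | MapsTo (M.evalFrom · z) X M.accept ∧ MapsTo (M.evalFrom · z) Y M.acceptᶜ}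

theorem stateComplexity_eq_ncard_range (K : Set (List A)) :
    stateComplexity K = (range (Language.leftQuotient K) : Set (Set (List A))).ncard := by
  have : rightCong K = Setoid.ker (Language.leftQuotient K) := by
    ext x y
    exact ⟨fun h => Set.ext h, fun h z => Set.ext_iff.mp h z⟩
  rw [stateComplexity, this, Nat.card_congr (Setoid.quotientKerEquivRange _), Nat.card_coe_set_eq]
  rfl

theorem atom_eq_pairLang (S : Set Q) : atom M S = pairLang M S Sᶜ := by
  ext w
  simp only [atom, pairLang, MapsTo, mem_ofPred_eq, mem_compl_iff]
  exact ⟨fun h => ⟨fun q => (h q).2, fun q hq hacc => hq ((h q).1 hacc)⟩,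
    fun h q => ⟨fun hacc => not_not.mp fun hq => h.2 hq hacc, fun hq => h.1 hq⟩⟩

theorem leftQuotient_pairLang (X Y : Set Q) (x : List A) :
    Language.leftQuotient (pairLang M X Y) x =
      pairLang M ((M.evalFrom · x) '' X) ((M.evalFrom · x) '' Y) := by
  ext z
  change x ++ z ∈ pairLang M X Y ↔ _
  simp only [pairLang, mem_ofPred_eq, mapsTo_image_iff, DFA.evalFrom_of_append]
  rfl

theorem range_leftQuotient_atom (S : Set Q) :
    (range (Language.leftQuotient (atom M S)) : Set (Set (List A))) =
      (fun P => pairLang M P.1 P.2) '' imagePairs (transitionMonoid M) S := by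
  ext L
  simp only [mem_image, imagePairs, mem_ofPred_eq]
  constructor
  · rintro ⟨x, rfl⟩
    exact ⟨_, ⟨_, ⟨x, rfl⟩, rfl⟩, by rw [atom_eq_pairLang, leftQuotient_pairLang]⟩
  · rintro ⟨_, ⟨_, ⟨x, rfl⟩, rfl⟩, rfl⟩
    exact ⟨x, by rw [atom_eq_pairLang, leftQuotient_pairLang]⟩

variable {M}

theorem pairLang_eq_empty {X Y : Set Q} (h : ¬Disjoint X Y) : pairLang M X Y = ∅ := by
  obtain ⟨q, hqX, hqY⟩ := not_disjoint_iff.mp h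
  exact eq_empty_of_forall_notMem fun z hz => hz.2 hqY (hz.1 hqX)

theorem pairLang_anti {X Y X' Y' : Set Q} (hX : X' ⊆ X) (hY : Y' ⊆ Y) :
    pairLang M X Y ⊆ pairLang M X' Y' :=
  fun _ hz => ⟨hz.1.mono_left hX, hz.2.mono_left hY⟩

theorem IsMinimal.accept_nonempty_and_compl_nonempty [Finite Q] (hmin : IsMinimal M)
    (hn : 1 < Nat.card Q) : M.accept.Nonempty ∧ M.acceptᶜ.Nonempty := by
  have := Finite.one_lt_card_iff_nontrivial.mp hn
  obtain ⟨p, q, hpq⟩ := exists_pair_ne Q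
  obtain ⟨w, hw⟩ := hmin.2 p q hpq
  by_cases hp : M.evalFrom p w ∈ M.accept
  · exact ⟨⟨_, hp⟩, ⟨_, fun hq => hw ⟨fun _ => hq, fun _ => hp⟩⟩⟩
  · exact ⟨⟨_, not_not.mp fun hq => hw ⟨fun h => (hp h).elim, fun h => (hq h).elim⟩⟩, ⟨_, hp⟩⟩

theorem atom_preimage_nonempty {S : Set Q} (hS : (atom M S).Nonempty) {f : Q → Q}
    (hf : f ∈ transitionMonoid M) : (atom M (f ⁻¹' S)).Nonempty := by
  obtain ⟨z, hz⟩ := hS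
  obtain ⟨w, rfl⟩ := hf
  exact ⟨w ++ z, fun q => by rw [DFA.evalFrom_of_append]; exact hz _⟩

variable [Finite Q]

theorem image_pairLang_imagePairs_subset (T : Submonoid (Function.End Q)) (S : Set Q) :
    (fun P => pairLang M P.1 P.2) '' imagePairs T S ⊆
      insert ∅ ((fun P => pairLang M P.1 P.2) '' (imagePairs T S ∩ admissiblePairs S)) := by
  rintro _ ⟨_, ⟨f, hf, rfl⟩, rfl⟩
  by_cases hdisj : Disjoint (f '' S) (f '' Sᶜ)
  · exact Or.inr ⟨_, ⟨⟨f, hf, rfl⟩, (image_mem_admissiblePairs_iff f).mpr hdisj⟩, rfl⟩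
  · exact Or.inl (pairLang_eq_empty hdisj)

section Reachable

variable (hreach : ∀ S, admissiblePairs S ⊆ imagePairs (transitionMonoid M) S)
  {a b : Q} (ha : a ∈ M.accept) (hb : b ∉ M.accept)
include hreach ha hb

theorem pairLang_nonempty {X Y : Set Q} (hXY : Disjoint X Y) : (pairLang M X Y).Nonempty := by
  have hconst (c : Q) (Z : Set Q) : (fun _ => c) '' Z ⊆ {c} := image_subset_iff.mpr fun _ _ => rfl
  have hab : Disjoint ((fun _ => a) '' Yᶜ) ((fun _ => b) '' Yᶜᶜ) :=
    (disjoint_singleton.mpr fun h : a = b => hb (h ▸ ha)).mono (hconst a _) (hconst b _)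
  obtain ⟨_, ⟨w, rfl⟩, hw⟩ := hreach Yᶜ
    (mem_admissiblePairs.mpr ⟨hab, ncard_image_le, ncard_image_le, .image _, .image _⟩)
  obtain ⟨hwX, hwY⟩ := Prod.mk.inj hw
  refine ⟨w, fun x hx => ?_, fun y hy => ?_⟩
  · have := hwX ▸ mem_image_of_mem (M.evalFrom · w) (hXY.subset_compl_right hx)
    show M.evalFrom x w ∈ M.accept
    rwa [mem_singleton_iff.mp (hconst a _ this)]
  · have := hwY ▸ mem_image_of_mem (M.evalFrom · w) (show y ∈ Yᶜᶜ from not_not.mpr hy)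
    show M.evalFrom y w ∉ M.accept
    rwa [mem_singleton_iff.mp (hconst b _ this)]

theorem pairLang_subset_pairLang_iff {X Y X' Y' : Set Q} (hXY : Disjoint X Y) :
    pairLang M X Y ⊆ pairLang M X' Y' ↔ X' ⊆ X ∧ Y' ⊆ Y := by
  refine ⟨fun h => ⟨fun x hx => ?_, fun y hy => ?_⟩, fun h => pairLang_anti h.1 h.2⟩
  · by_contra hxX
    obtain ⟨z, hz⟩ := pairLang_nonempty hreach ha hb (disjoint_insert_right.mpr ⟨hxX, hXY⟩)
    exact hz.2 (mem_insert x Y) ((h (pairLang_anti subset_rfl (subset_insert x Y) hz)).1 hx)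
  · by_contra hyY
    obtain ⟨z, hz⟩ := pairLang_nonempty hreach ha hb (disjoint_insert_left.mpr ⟨hyY, hXY⟩)
    exact (h (pairLang_anti (subset_insert y X) subset_rfl hz)).2 hy (hz.1 (mem_insert y X))

theorem pairLang_injOn :
    InjOn (fun P => pairLang M P.1 P.2) {P : Set Q × Set Q | Disjoint P.1 P.2} := by
  intro P hP P' hP' h
  obtain ⟨h₁, h₂⟩ := (pairLang_subset_pairLang_iff hreach ha hb hP').mp h.ge
  obtain ⟨h₃, h₄⟩ := (pairLang_subset_pairLang_iff hreach ha hb hP).mp h.le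
  exact Prod.ext (h₁.antisymm h₃) (h₂.antisymm h₄)

end Reachable

theorem stateComplexity_atom_eq_Psi (hT : IsSetTransitive (transitionMonoid M)) {e : Q → Q}
    {p q r : Q} (he : e ∈ transitionMonoid M) (hm : IsMerge e p q r) {a b : Q}
    (ha : a ∈ M.accept) (hb : b ∉ M.accept) (S : Set Q) :
    stateComplexity (atom M S) = Psi (Nat.card Q) S.ncard := by
  have hreach := admissiblePairs_subset_imagePairs hT he hm
  have hinj : InjOn (fun P => pairLang M P.1 P.2) (admissiblePairs S) :=
    (pairLang_injOn hreach ha hb).mono fun _ hP => hP.1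
  -- if `S` or `Sᶜ` is empty, every image pair is disjoint and the empty quotient does not occur
  have hdegenerate (h : imagePairs (transitionMonoid M) S ⊆ admissiblePairs S) :
      stateComplexity (atom M S) = (admissiblePairs S).ncard := by
    rw [stateComplexity_eq_ncard_range, range_leftQuotient_atom, h.antisymm (hreach S),
      hinj.ncard_image]
  have : Nonempty Q := ⟨p⟩
  rcases S.eq_empty_or_nonempty with rfl | hS
  · rw [hdegenerate, ncard_admissiblePairs_empty]
    rintro _ ⟨f, -, rfl⟩
    exact (image_mem_admissiblePairs_iff f).mpr (by simp)
  rcases Sᶜ.eq_empty_or_nonempty with hSc | hSc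
  · obtain rfl := compl_empty_iff.mp hSc
    rw [hdegenerate, ncard_admissiblePairs_univ]
    rintro _ ⟨f, -, rfl⟩
    exact (image_mem_admissiblePairs_iff f).mpr (by simp)
  obtain ⟨x, hx⟩ := hS
  obtain ⟨y, hy⟩ := hSc
  obtain ⟨f, hf, hfxy⟩ := exists_mem_apply_eq_apply hT he hm (a := x) (b := y)
    fun h => hy (h ▸ hx)
  have hempty : ∅ ∈ (fun P => pairLang M P.1 P.2) '' imagePairs (transitionMonoid M) S :=
    ⟨_, ⟨f, hf, rfl⟩, pairLang_eq_empty (not_disjoint_iff.mpr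
      ⟨f x, mem_image_of_mem f hx, hfxy ▸ mem_image_of_mem f hy⟩)⟩
  have hrange : (fun P => pairLang M P.1 P.2) '' imagePairs (transitionMonoid M) S =
      insert ∅ ((fun P => pairLang M P.1 P.2) '' admissiblePairs S) := by
    refine (image_pairLang_imagePairs_subset _ S).trans ?_ |>.antisymm
      (insert_subset hempty (image_mono (hreach S)))
    rw [inter_eq_right.mpr (hreach S)]
  have hnotMem : ∅ ∉ (fun P => pairLang M P.1 P.2) '' admissiblePairs S := by
    rintro ⟨P, hP, hP0⟩
    exact (pairLang_nonempty hreach ha hb hP.1).ne_empty hP0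
  rw [stateComplexity_eq_ncard_range, range_leftQuotient_atom, hrange,
    ncard_insert_of_notMem hnotMem, hinj.ncard_image, ncard_admissiblePairs_add_one ⟨x, hx⟩ ⟨y, hy⟩]

theorem atom_nonempty_and_stateComplexity_eq (hmin : IsMinimal M) (hn : 2 ≤ Nat.card Q)
    (hrank : ∃ f : Q → Q, f ∈ transitionMonoid M ∧ (range f).ncard = Nat.card Q - 1)
    (hT : IsSetTransitive (transitionMonoid M)) (S : Set Q) :
    (atom M S).Nonempty ∧ stateComplexity (atom M S) = Psi (Nat.card Q) S.ncard := by
  obtain ⟨⟨a, ha⟩, ⟨b, hb⟩⟩ := hmin.accept_nonempty_and_compl_nonempty hn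
  obtain ⟨e, he, hr⟩ := hrank
  have : Nonempty Q := ⟨a⟩
  obtain ⟨p, q, r, hm⟩ := IsMerge.exists_of_ncard_range hr
  have hreach := admissiblePairs_subset_imagePairs hT he hm
  exact ⟨atom_eq_pairLang M S ▸ pairLang_nonempty hreach ha hb disjoint_compl_right,
    stateComplexity_atom_eq_Psi hT he hm ha hb S⟩

theorem admissiblePairs_subset_imagePairs_of_stateComplexity_eq {S : Set Q}
    (h0 : 0 < S.ncard) (hn : S.ncard < Nat.card Q)
    (h : stateComplexity (atom M S) = Psi (Nat.card Q) S.ncard) :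
    admissiblePairs S ⊆ imagePairs (transitionMonoid M) S := by
  have hSc : Sᶜ.Nonempty := (ncard_pos).mp (by rw [ncard_compl]; omega)
  rw [stateComplexity_eq_ncard_range, range_leftQuotient_atom,
    ← ncard_admissiblePairs_add_one ((ncard_pos).mp h0) hSc] at h
  have hle : (admissiblePairs S).ncard ≤
      (imagePairs (transitionMonoid M) S ∩ admissiblePairs S).ncard := by
    have hsub := image_pairLang_imagePairs_subset (M := M) (transitionMonoid M) S
    have := (ncard_le_ncard hsub).trans (ncard_insert_le _ _)
    have := ncard_image_le (f := fun P => pairLang M P.1 P.2)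
      (s := imagePairs (transitionMonoid M) S ∩ admissiblePairs S)
    omega
  rw [← eq_of_subset_of_ncard_le inter_subset_right hle]
  exact inter_subset_left

section MaximalAtoms

variable (h : ∀ S : Set Q, (atom M S).Nonempty →
    stateComplexity (atom M S) = Psi (Nat.card Q) S.ncard)
  {S : Set Q} (hS : (atom M S).Nonempty) (h0 : 0 < S.ncard) (hn : S.ncard < Nat.card Q)
include h hS h0 hn

theorem atom_nonempty_of_ncard_eq {X : Set Q} (hX : X.ncard = S.ncard) : (atom M X).Nonempty := by
  obtain ⟨σ, hσ, hσX⟩ := exists_perm_image_eq_of_admissiblePairs_subset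
    (admissiblePairs_subset_imagePairs_of_stateComplexity_eq h0 hn (h S hS)) hX rfl
  rw [← preimage_image_eq X σ.injective, hσX]
  exact atom_preimage_nonempty hS hσ

variable {e : Q → Q} {p q r : Q} (he : e ∈ transitionMonoid M) (hm : IsMerge e p q r)
include he hm

theorem exists_atom_nonempty_ncard_succ :
    ∃ S' : Set Q, S'.ncard = S.ncard + 1 ∧ (atom M S').Nonempty := by
  obtain ⟨Z, hcZ, hZr, hZ⟩ := exists_subsuperset_card_eq (s := {e p}) (t := {r}ᶜ) (n := S.ncard)
    (singleton_subset_iff.mpr (hm.apply_ne p)) (by rw [ncard_singleton]; omega)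
    (by rw [ncard_compl, ncard_singleton]; omega)
  exact ⟨e ⁻¹' Z, by rw [hm.ncard_preimage_of_apply_mem (hcZ rfl) (fun hr => hZr hr rfl), hZ],
    atom_preimage_nonempty (atom_nonempty_of_ncard_eq h hS h0 hn hZ) he⟩

theorem exists_atom_nonempty_ncard_pred :
    ∃ S' : Set Q, S'.ncard + 1 = S.ncard ∧ (atom M S').Nonempty := by
  obtain ⟨Z, hrZ, hZc, hZ⟩ := exists_subsuperset_card_eq (s := {r}) (t := {e p}ᶜ) (n := S.ncard)
    (singleton_subset_iff.mpr (hm.apply_ne p).symm) (by rw [ncard_singleton]; omega)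
    (by rw [ncard_compl, ncard_singleton]; omega)
  refine ⟨e ⁻¹' Z, ?_, atom_preimage_nonempty (atom_nonempty_of_ncard_eq h hS h0 hn hZ) he⟩
  rw [hm.ncard_preimage_of_apply_notMem (fun hc => hZc hc rfl),
    ncard_sdiff_singleton_of_mem (hrZ rfl), hZ]
  omega

end MaximalAtoms

theorem exists_ncard_range_and_isSetTransitive (hmin : IsMinimal M) (hn : 3 ≤ Nat.card Q)
    (h : ∀ S : Set Q, (atom M S).Nonempty →
      stateComplexity (atom M S) = Psi (Nat.card Q) S.ncard) :
    (∃ f : Q → Q, f ∈ transitionMonoid M ∧ (range f).ncard = Nat.card Q - 1) ∧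
      IsSetTransitive (transitionMonoid M) := by
  obtain ⟨hF, hFc⟩ := hmin.accept_nonempty_and_compl_nonempty (by omega)
  have hF0 : 0 < M.accept.ncard := (ncard_pos).mpr hF
  have hFn : M.accept.ncard < Nat.card Q := by
    have := (ncard_pos).mpr hFc
    rw [ncard_compl] at this
    omega
  have hFatom : (atom M M.accept).Nonempty := ⟨[], fun _ => Iff.rfl⟩
  obtain ⟨e, he, hrank⟩ := exists_ncard_range_eq_of_admissiblePairs_subset
    (admissiblePairs_subset_imagePairs_of_stateComplexity_eq hF0 hFn (h _ hFatom)) hF hFc hn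
  have : Nonempty Q := hF.to_subtype.map Subtype.val
  obtain ⟨p, q, r, hm⟩ := IsMerge.exists_of_ncard_range hrank
  set P : ℕ → Prop := fun k => ∃ S : Set Q, S.ncard = k ∧ (atom M S).Nonempty
  have hstep (k : ℕ) (hk : 1 ≤ k) (hkn : k < Nat.card Q - 1) : P k ↔ P (k + 1) := by
    constructor
    · rintro ⟨S, rfl, hS⟩
      exact exists_atom_nonempty_ncard_succ h hS (by omega) (by omega) he hm
    · rintro ⟨S, hSk, hS⟩
      obtain ⟨S', hS', hS'ne⟩ :=
        exists_atom_nonempty_ncard_pred h hS (by omega) (by omega) he hm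
      exact ⟨S', by omega, hS'ne⟩
  have hP (k : ℕ) (hk : 0 < k) (hkn : k < Nat.card Q) : P k :=
    ((Nat.iff_of_iff_succ hstep (by omega : 1 ≤ M.accept.ncard) (by omega)).symm.trans
      (Nat.iff_of_iff_succ hstep (by omega : 1 ≤ k) (by omega))).mp ⟨_, rfl, hFatom⟩
  refine ⟨⟨e, he, hrank⟩, IsSetTransitive.of_ncard_pos_lt fun X Y hXY hX0 hXn => ?_⟩
  obtain ⟨S, hSX, hS⟩ := hP X.ncard hX0 hXn
  exact exists_perm_image_eq_of_admissiblePairs_subset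
    (admissiblePairs_subset_imagePairs_of_stateComplexity_eq (hSX ▸ hX0) (hSX ▸ hXn) (h S hS))
    hSX.symm (hXY ▸ hSX.symm)

theorem isSetTransitive_transitionMonoid_iff : IsSetTransitive (transitionMonoid M) ↔
    ∀ k : ℕ, 1 ≤ k → k ≤ Nat.card Q → ∀ X Y : Set Q, X.ncard = k → Y.ncard = k →
      ∃ w : List A, Bijective (fun q => M.evalFrom q w) ∧ (fun q => M.evalFrom q w) '' X = Y := by
  constructor
  · intro hT k _ _ X Y hX hY
    obtain ⟨σ, ⟨w, hw⟩, hσ⟩ := hT X Y (hX.trans hY.symm)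
    have hw : (fun q => M.evalFrom q w) = σ := hw
    exact ⟨w, hw ▸ σ.bijective, hw ▸ hσ⟩
  · refine fun h => IsSetTransitive.of_ncard_pos_lt fun X Y hXY hX0 hXn => ?_
    obtain ⟨w, hw, hwX⟩ := h _ hX0 hXn.le X Y rfl hXY.symm
    exact ⟨Equiv.ofBijective _ hw, ⟨w, rfl⟩, hwX⟩

theorem exists_ne_nil_ncard_range_iff [Nonempty Q] :
    (∃ w : List A, w ≠ [] ∧ (range fun q => M.evalFrom q w).ncard = Nat.card Q - 1) ↔
      ∃ f : Q → Q, f ∈ transitionMonoid M ∧ (range f).ncard = Nat.card Q - 1 := by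
  refine ⟨fun ⟨w, _, hw⟩ => ⟨_, ⟨w, rfl⟩, hw⟩, fun ⟨_, ⟨w, rfl⟩, hrank⟩ => ⟨w, ?_, hrank⟩⟩
  rintro rfl
  have hpos : 0 < Nat.card Q := Nat.card_pos
  simp only [DFA.evalFrom_nil, range_id', ncard_univ] at hrank
  omega

end Automaton

theorem statement10_general {A Q : Type*} [Fintype Q] (M : DFA A Q)
    (n : ℕ) (hQ : Fintype.card Q = n) (hn : 3 ≤ n) (hmin : IsMinimal M) :
    ((∀ S : Set Q, (atom M S).Nonempty ∧
        stateComplexity (atom M S) = Psi n S.ncard) ↔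
      (∀ S : Set Q, (atom M S).Nonempty →
        stateComplexity (atom M S) = Psi n S.ncard)) ∧
    ((∀ S : Set Q, (atom M S).Nonempty →
        stateComplexity (atom M S) = Psi n S.ncard) ↔
      ((∃ w : List A, w ≠ [] ∧
          (Set.range (fun q => M.evalFrom q w)).ncard = n - 1) ∧
        (∀ k : ℕ, 1 ≤ k → k ≤ n → ∀ X Y : Set Q, X.ncard = k → Y.ncard = k →
          ∃ w : List A, Function.Bijective (fun q => M.evalFrom q w) ∧
            (fun q => M.evalFrom q w) '' X = Y))) := by
  obtain rfl : Nat.card Q = n := Nat.card_eq_fintype_card.trans hQ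
  have : Nonempty Q := Nat.card_pos_iff.mp (by omega) |>.1
  rw [exists_ne_nil_ncard_range_iff, ← isSetTransitive_transitionMonoid_iff]
  have h2to3 := exists_ncard_range_and_isSetTransitive hmin hn
  have h3to1 (h : _ ∧ _) := atom_nonempty_and_stateComplexity_eq hmin (by omega) h.1 h.2
  exact ⟨⟨fun h S _ => (h S).2, fun h => h3to1 (h2to3 h)⟩, h2to3, fun h S _ => (h3to1 h S).2⟩

/-- characterization of maximally atomic languages. For a minimal
DFA `M` with `n ≥ 3` states the following are equivalent: (1) the recognized
language is maximally atomic; (2) every nonempty atom has maximal state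
complexity; (3) some nonempty word induces a transformation of rank `n - 1`
and `P(M)` is set-transitive. -/
theorem statement10 {A Q : Type*} [Fintype A] [Fintype Q] (M : DFA A Q)
    (n : ℕ) (hQ : Fintype.card Q = n) (hn : 3 ≤ n) (hmin : IsMinimal M) :
    ((∀ S : Set Q, (atom M S).Nonempty ∧
        stateComplexity (atom M S) = Psi n S.ncard) ↔
      (∀ S : Set Q, (atom M S).Nonempty →
        stateComplexity (atom M S) = Psi n S.ncard)) ∧
    ((∀ S : Set Q, (atom M S).Nonempty →
        stateComplexity (atom M S) = Psi n S.ncard) ↔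
      ((∃ w : List A, w ≠ [] ∧
          (Set.range (fun q => M.evalFrom q w)).ncard = n - 1) ∧
        (∀ k : ℕ, 1 ≤ k → k ≤ n → ∀ X Y : Set Q, X.ncard = k → Y.ncard = k →
          ∃ w : List A, Function.Bijective (fun q => M.evalFrom q w) ∧
            (fun q => M.evalFrom q w) '' X = Y))) :=
  statement10_general M n hQ hn hmin
end
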